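/- Let α > 0 and let V : [0,∞) → [0,∞) be a measurable function that is real-analytic at 0, i.e. there exist x₁ > 0 and real coefficients (c_n)_{n≥0} with V(x) = Σ_{n≥0} c_n xⁿ for all x ∈ [0, x₁]. Suppose inf{ x > 0 : ∫₀^{αx} V(y) dy < x } = 0. Then there exist c > 0, x₀ > 0 and n ∈ ℕ such that V(x) ≤ α⁻¹ − c xⁿ for all x ∈ (0, x₀). In particular V(0) ≤ α⁻¹, and if V(0) = α⁻¹ then the first nonzero coefficient c_{n₀} with n₀ ≥ 1 exists and is negative. -/

import Mathlib

open MeasureTheory Filter Set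
open scoped ENNReal

noncomputable section

lemma tail_bound' (x₁ M : ℝ) (hx₁ : 0 < x₁) (cs : ℕ → ℝ)
    (hb : ∀ n, |cs n| * x₁ ^ n ≤ M) (k : ℕ) (x : ℝ) (hx0 : 0 ≤ x) (hx : x ≤ x₁ / 2)
    (S : ℝ) (hS : HasSum (fun n => cs n * x ^ n) S) :
    |S - ∑ i ∈ Finset.range k, cs i * x ^ i| ≤ 2 * M * (x / x₁) ^ k := by
  set r : ℝ := x / x₁ with hr
  have hr0 : 0 ≤ r := div_nonneg hx0 hx₁.le
  have hr2 : r ≤ 1 / 2 := by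
    rw [hr, div_le_div_iff₀ hx₁ two_pos]; linarith
  have hr1 : r < 1 := lt_of_le_of_lt hr2 (by norm_num)
  have hxr : x = r * x₁ := by rw [hr, div_mul_cancel₀ _ hx₁.ne']
  have hT : HasSum (fun n => cs (n + k) * x ^ (n + k))
      (S - ∑ i ∈ Finset.range k, cs i * x ^ i) := by
    refine (hasSum_nat_add_iff (f := fun n => cs n * x ^ n) k).mpr ?_
    simpa using hS
  have hM0 : 0 ≤ M := le_trans (by positivity) (hb 0)
  have hG : HasSum (fun n => M * r ^ k * r ^ n) (M * r ^ k * (1 - r)⁻¹) :=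
    (hasSum_geometric_of_lt_one hr0 hr1).mul_left _
  have hterm : ∀ n, |cs (n + k) * x ^ (n + k)| ≤ M * r ^ k * r ^ n := by
    intro n
    have : |cs (n + k) * x ^ (n + k)| = |cs (n + k)| * x₁ ^ (n + k) * r ^ (n + k) := by
      rw [abs_mul, abs_pow, abs_of_nonneg hx0, hxr, mul_pow]
      ring
    rw [this]
    have h1 : |cs (n + k)| * x₁ ^ (n + k) * r ^ (n + k) ≤ M * r ^ (n + k) :=
      mul_le_mul_of_nonneg_right (hb _) (pow_nonneg hr0 _)
    calc |cs (n + k)| * x₁ ^ (n + k) * r ^ (n + k) ≤ M * r ^ (n + k) := h1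
      _ = M * r ^ k * r ^ n := by rw [pow_add]; ring
  have habs : |S - ∑ i ∈ Finset.range k, cs i * x ^ i| ≤ M * r ^ k * (1 - r)⁻¹ := by
    rw [abs_le]
    constructor
    · have := hasSum_le (fun n => (neg_le_of_abs_le (hterm n))) hG.neg hT
      linarith [this]
    · exact hasSum_le (fun n => le_of_abs_le (hterm n)) hT hG
  calc |S - ∑ i ∈ Finset.range k, cs i * x ^ i| ≤ M * r ^ k * (1 - r)⁻¹ := habs
    _ ≤ M * r ^ k * 2 := by
        apply mul_le_mul_of_nonneg_left _ (by positivity)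
        rw [inv_le_comm₀ (by linarith) two_pos]; linarith
    _ = 2 * M * r ^ k := by ring

lemma integral_contra' (α : ℝ) (hα : 0 < α) (V : ℝ → ℝ)
    (hinf : ∀ ε > (0 : ℝ), ∃ x : ℝ, 0 < x ∧ x < ε ∧
      (∫⁻ y in Set.Icc (0 : ℝ) (α * x), ENNReal.ofReal (V y)) < ENNReal.ofReal x)
    (ρ : ℝ) (hρ : 0 < ρ) (h : ∀ y ∈ Set.Icc (0:ℝ) ρ, α⁻¹ ≤ V y) : False := by
  obtain ⟨x, hx0, hxlt, hint⟩ := hinf (ρ / α) (by positivity)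
  have hαx : α * x ≤ ρ := by
    have := (lt_div_iff₀ hα).mp hxlt
    nlinarith
  have key : ENNReal.ofReal x ≤ ∫⁻ y in Set.Icc (0:ℝ) (α * x), ENNReal.ofReal (V y) := by
    calc ENNReal.ofReal x = ENNReal.ofReal α⁻¹ * volume (Set.Icc (0:ℝ) (α * x)) := by
          rw [Real.volume_Icc, ← ENNReal.ofReal_mul (by positivity)]
          congr 1
          field_simp
          ring
      _ = ∫⁻ _ in Set.Icc (0:ℝ) (α * x), ENNReal.ofReal α⁻¹ := (setLIntegral_const _ _).symm
      _ ≤ ∫⁻ y in Set.Icc (0:ℝ) (α * x), ENNReal.ofReal (V y) := by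
          refine setLIntegral_mono' measurableSet_Icc fun y hy => ?_
          exact ENNReal.ofReal_le_ofReal (h y ⟨hy.1, hy.2.trans hαx⟩)
  exact absurd (lt_of_le_of_lt key hint) (lt_irrefl _)

/-- **(Polynomial control from analyticity and the physical restart condition, cf. the proof
of Theorem 3.4.)** Let `α > 0` and let `V : [0,∞) → [0,∞)` be measurable and real-analytic
at `0`, say `V(x) = Σ cₙ xⁿ` on `[0, x₁]`. If `inf{ x > 0 : ∫₀^{αx} V < x } = 0`, i.e. there
are arbitrarily small `x > 0` with `∫₀^{αx} V(y) dy < x`, then there exist `c > 0`, `x₀ > 0`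
and `n ∈ ℕ` with `V(x) ≤ α⁻¹ − c xⁿ` on `(0, x₀)`; in particular `V(0) ≤ α⁻¹`, and if
`V(0) = α⁻¹` then the first nonzero coefficient `c_{n₀}`, `n₀ ≥ 1`, exists and is negative. -/
theorem analytic_physical_restart_control
    (α : ℝ) (hα : 0 < α)
    (V : ℝ → ℝ) (hVmeas : Measurable V) (hVnonneg : ∀ x, 0 ≤ x → 0 ≤ V x)
    (x₁ : ℝ) (hx₁ : 0 < x₁) (cs : ℕ → ℝ)
    (hseries : ∀ x ∈ Set.Icc (0 : ℝ) x₁, HasSum (fun n => cs n * x ^ n) (V x))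
    (hinf : ∀ ε > (0 : ℝ), ∃ x : ℝ, 0 < x ∧ x < ε ∧
      (∫⁻ y in Set.Icc (0 : ℝ) (α * x), ENNReal.ofReal (V y)) < ENNReal.ofReal x) :
    (∃ c > (0 : ℝ), ∃ x₀ > (0 : ℝ), ∃ n : ℕ,
      ∀ x ∈ Set.Ioo (0 : ℝ) x₀, V x ≤ α⁻¹ - c * x ^ n) ∧
    V 0 ≤ α⁻¹ ∧
    (V 0 = α⁻¹ → ∃ n₀ : ℕ, 1 ≤ n₀ ∧ (∀ m, 1 ≤ m → m < n₀ → cs m = 0) ∧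
      cs n₀ ≠ 0 ∧ cs n₀ < 0) := by
  -- coefficient bound
  obtain ⟨M₀, hM₀⟩ : BddAbove (Set.range fun n => |cs n * x₁ ^ n|) := by
    have h0 := (hseries x₁ ⟨hx₁.le, le_rfl⟩).summable.tendsto_atTop_zero
    exact h0.abs.bddAbove_range
  set M : ℝ := max M₀ 1 with hMdef
  have hM1 : (0:ℝ) < M := lt_of_lt_of_le one_pos (le_max_right _ _)
  have hb : ∀ n, |cs n| * x₁ ^ n ≤ M := by
    intro n
    have h1 : |cs n * x₁ ^ n| ≤ M₀ := hM₀ ⟨n, rfl⟩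
    have h2 : |cs n * x₁ ^ n| = |cs n| * x₁ ^ n := by
      rw [abs_mul, abs_pow, abs_of_pos hx₁]
    rw [← h2]; exact h1.trans (le_max_left _ _)
  -- V 0 = cs 0
  have hV0 : V 0 = cs 0 := by
    have h := hseries 0 ⟨le_rfl, hx₁.le⟩
    have h2 : HasSum (fun n => cs n * (0:ℝ) ^ n) (cs 0) := by
      have := hasSum_single (f := fun n => cs n * (0:ℝ) ^ n) 0
        (fun b hb' => by simp [zero_pow hb'])
      simpa using this
    exact h.unique h2
  set K1 : ℝ := 2 * M / x₁ with hK1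
  have hK1pos : 0 < K1 := by positivity
  -- tail bound at order 1
  have tb1 : ∀ x, 0 ≤ x → x ≤ x₁ / 2 → x ≤ x₁ → |V x - cs 0| ≤ K1 * x := by
    intro x h0 h2 h3
    have := tail_bound' x₁ M hx₁ cs hb 1 x h0 h2 (V x) (hseries x ⟨h0, h3⟩)
    simp only [Finset.range_one, Finset.sum_singleton, pow_zero, mul_one] at this
    calc |V x - cs 0| ≤ 2 * M * (x / x₁) ^ 1 := this
      _ = K1 * x := by rw [pow_one, hK1]; ring
  -- exclude cs 0 > α⁻¹
  have hle : cs 0 ≤ α⁻¹ := by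
    by_contra hgt
    push_neg at hgt
    set ρ : ℝ := min (x₁ / 2) ((cs 0 - α⁻¹) / K1) with hρdef
    have hρpos : 0 < ρ := lt_min (by positivity) (by
      apply div_pos (by linarith) hK1pos)
    refine integral_contra' α hα V hinf ρ hρpos fun y hy => ?_
    have hy2 : y ≤ x₁ / 2 := hy.2.trans (min_le_left _ _)
    have hy3 : y ≤ (cs 0 - α⁻¹) / K1 := hy.2.trans (min_le_right _ _)
    have := tb1 y hy.1 hy2 (hy2.trans (by linarith))
    have h4 : K1 * y ≤ cs 0 - α⁻¹ := by
      rw [← le_div_iff₀' hK1pos]; exact hy3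
    have := abs_le.mp this
    linarith [this.1]
  rcases eq_or_lt_of_le hle with heq | hlt
  · -- cs 0 = α⁻¹
    by_cases hall : ∀ n, 1 ≤ n → cs n = 0
    · -- V ≡ α⁻¹ on [0, x₁]: contradiction
      exfalso
      refine integral_contra' α hα V hinf x₁ hx₁ fun y hy => ?_
      have h2 : HasSum (fun n => cs n * y ^ n) (cs 0) := by
        have := hasSum_single (f := fun n => cs n * y ^ n) 0
          (fun b hb' => by have h := hall b (Nat.one_le_iff_ne_zero.mpr hb'); simp [h])
        simpa using this
      have := (hseries y hy).unique h2
      rw [this, ← heq]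
    · push_neg at hall
      have hex : ∃ n, 1 ≤ n ∧ cs n ≠ 0 := by
        obtain ⟨n, hn1, hn2⟩ := hall; exact ⟨n, hn1, hn2⟩
      set n₀ := Nat.find hex with hn₀def
      obtain ⟨hn₀1, hn₀ne⟩ := Nat.find_spec hex
      have hmin : ∀ m, 1 ≤ m → m < n₀ → cs m = 0 := by
        intro m h1 h2
        by_contra hne
        exact Nat.find_min hex h2 ⟨h1, hne⟩
      set d : ℝ := cs n₀ with hd
      -- partial sum formula
      have hps : ∀ x : ℝ, ∑ i ∈ Finset.range (n₀ + 1), cs i * x ^ i = cs 0 + d * x ^ n₀ := by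
        intro x
        rw [Finset.sum_range_succ]
        congr 1
        · rw [Finset.sum_eq_single_of_mem 0 (Finset.mem_range.mpr (by omega))]
          · simp
          · intro i hi hi0
            rw [hmin i (Nat.one_le_iff_ne_zero.mpr hi0) (Finset.mem_range.mp hi)]; ring
      set K : ℝ := 2 * M / x₁ ^ (n₀ + 1) with hK
      have hKpos : 0 < K := by positivity
      have tb : ∀ x, 0 ≤ x → x ≤ x₁ / 2 →
          |V x - (cs 0 + d * x ^ n₀)| ≤ K * x * x ^ n₀ := by
        intro x h0 h2
        have h3 : x ≤ x₁ := h2.trans (by linarith)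
        have := tail_bound' x₁ M hx₁ cs hb (n₀ + 1) x h0 h2 (V x) (hseries x ⟨h0, h3⟩)
        rw [hps x] at this
        calc |V x - (cs 0 + d * x ^ n₀)| ≤ 2 * M * (x / x₁) ^ (n₀ + 1) := this
          _ = K * x * x ^ n₀ := by
              rw [hK, div_pow, pow_succ]
              field_simp
      -- d < 0
      have hdneg : d < 0 := by
        rcases lt_trichotomy d 0 with h | h | h
        · exact h
        · exact absurd h hn₀ne
        · exfalso
          set ρ : ℝ := min (x₁ / 2) (d / K) with hρdef
          have hρpos : 0 < ρ := lt_min (by positivity) (div_pos h hKpos)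
          refine integral_contra' α hα V hinf ρ hρpos fun y hy => ?_
          have hy2 : y ≤ x₁ / 2 := hy.2.trans (min_le_left _ _)
          have hy3 : y ≤ d / K := hy.2.trans (min_le_right _ _)
          have hKy : K * y ≤ d := by rw [← le_div_iff₀' hKpos]; exact hy3
          have htb := abs_le.mp (tb y hy.1 hy2)
          have hpow : 0 ≤ y ^ n₀ := pow_nonneg hy.1 _
          nlinarith [htb.1]
      -- conclusion
      refine ⟨⟨-d / 2, by linarith, min (x₁ / 2) ((-d / 2) / K), lt_min (by positivity)
        (div_pos (by linarith) hKpos), n₀, fun x hx => ?_⟩, by rw [hV0]; exact hle,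
        fun _ => ⟨n₀, hn₀1, hmin, hn₀ne, hdneg⟩⟩
      have hx0 : 0 ≤ x := hx.1.le
      have hx2 : x ≤ x₁ / 2 := hx.2.le.trans (min_le_left _ _)
      have hx3 : x ≤ (-d / 2) / K := hx.2.le.trans (min_le_right _ _)
      have hKx : K * x ≤ -d / 2 := by rw [← le_div_iff₀' hKpos]; exact hx3
      have htb := abs_le.mp (tb x hx0 hx2)
      have hpow : 0 ≤ x ^ n₀ := pow_nonneg hx0 _
      have : V x ≤ α⁻¹ + d * x ^ n₀ + K * x * x ^ n₀ := by
        rw [← heq]; linarith [htb.2]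
      nlinarith
  · -- cs 0 < α⁻¹
    set c : ℝ := (α⁻¹ - cs 0) / 2 with hc
    have hcpos : 0 < c := by rw [hc]; linarith
    refine ⟨⟨c, hcpos, min (x₁ / 2) (c / K1), lt_min (by positivity) (div_pos hcpos hK1pos),
      0, fun x hx => ?_⟩, by rw [hV0]; exact hle, fun hv => absurd (hV0 ▸ hv) (by
        intro h; rw [h] at hlt; exact lt_irrefl _ hlt)⟩
    have hx0 : 0 ≤ x := hx.1.le
    have hx2 : x ≤ x₁ / 2 := hx.2.le.trans (min_le_left _ _)
    have hx3 : x ≤ c / K1 := hx.2.le.trans (min_le_right _ _)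
    have hKx : K1 * x ≤ c := by rw [← le_div_iff₀' hK1pos]; exact hx3
    have htb := abs_le.mp (tb1 x hx0 hx2 (hx2.trans (by linarith)))
    simp only [pow_zero, mul_one]
    rw [hc] at hKx ⊢
    linarith [htb.2]
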